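/- For every n ≥ 1, the largest integer expressible as Σ_{i∈S} a(i) for a Kentucky-2 legal subset S of {1, 2, …, 2n} is a(2n+1) − 1; consequently, every integer in [0, a(2n+1)) has its unique Kentucky-2 legal decomposition using only indices at most 2n. -/

import Mathlib

/-- The Kentucky-2 sequence: `a 1 = 1`, `a 2 = 2`, `a 3 = 3`, `a 4 = 4`, and
`a (n+4) = a (n+2) + 2 * a n` for all `n ≥ 1`. -/
def kent : ℕ → ℕ
  | 0 => 0
  | 1 => 1
  | 2 => 2
  | 3 => 3
  | 4 => 4
  | n + 5 => kent (n + 3) + 2 * kent (n + 1)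

/-- A finite set `S` of positive integers is Kentucky-2 legal if for all distinct
`i, j ∈ S` we have `|⌈i/2⌉ - ⌈j/2⌉| ≥ 2`. -/
def KLegal (S : Finset ℕ) : Prop :=
  (∀ i ∈ S, 1 ≤ i) ∧
  ∀ i ∈ S, ∀ j ∈ S, i ≠ j → 2 ≤ |(((i + 1) / 2 : ℕ) : ℤ) - (((j + 1) / 2 : ℕ) : ℤ)|

lemma kent_even2 : ∀ t, kent (2*t+4) = 2 * kent (2*t+2)
  | 0 => rfl
  | (t+1) => by
    have h := kent_even2 t
    show kent (2*t+6) = 2 * kent (2*t+4)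
    rw [show 2*t+6 = (2*t+1)+5 from by ring, kent]
    have e1 : kent (2*t+1+3) = kent (2*t+4) := rfl
    have e2 : kent (2*t+1+1) = kent (2*t+2) := rfl
    omega

lemma kent_pair2 : ∀ t, kent (2*t+3) + kent (2*t+1) = 2 * kent (2*t+2)
  | 0 => rfl
  | (t+1) => by
    have h := kent_pair2 t
    have h2 := kent_even2 t
    show kent (2*t+5) + kent (2*t+3) = 2 * kent (2*t+4)
    rw [show 2*t+5 = (2*t)+5 from rfl, kent]
    omega

lemma kent_key (t : ℕ) : kent (2*t+5) = kent (2*t+4) + kent (2*t+1) := by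
  have h1 := kent_pair2 t
  have h2 := kent_even2 t
  rw [show 2*t+5 = (2*t)+5 from rfl, kent]
  omega

lemma kent_succ_le : ∀ k, kent k ≤ kent (k+1)
  | 0 => by simp [kent]
  | 1 => by simp [kent]
  | 2 => by simp [kent]
  | 3 => by simp [kent]
  | 4 => by simp [kent]
  | (m+5) => by
    have h1 := kent_succ_le (m+1)
    have h2 := kent_succ_le (m+3)
    show kent (m+5) ≤ kent (m+6)
    rw [show m+6 = (m+1)+5 from by ring, kent, kent]
    have e : kent (m+1+3) = kent (m+3+1) := rfl
    omega

lemma kent_mono : Monotone kent := monotone_nat_of_le_succ kent_succ_le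

lemma kent_pos {k : ℕ} (h : 1 ≤ k) : 1 ≤ kent k := by
  have := kent_mono h
  simpa [kent] using this

lemma kent_split (m : ℕ) : kent (2*m+3) = kent (2*m+2) + kent (2*(m-1)+1) := by
  cases m with
  | zero => rfl
  | succ t =>
    have := kent_key t
    simpa [show 2*(t+1)+3 = 2*t+5 from by ring, show 2*(t+1)+2 = 2*t+4 from by ring] using this

lemma kent_bound : ∀ n (S : Finset ℕ), KLegal S → S ⊆ Finset.Icc 1 (2*n) →
    ∑ i ∈ S, kent i < kent (2*n+1) := by
  intro n
  induction n using Nat.strong_induction_on with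
  | _ n ih =>
    intro S hleg hsub
    match n with
    | 0 =>
      have hS : S = ∅ := by
        rw [Finset.eq_empty_iff_forall_notMem]
        intro x hx
        have := hsub hx
        rw [Finset.mem_Icc] at this
        omega
      simp [hS, kent]
    | (m+1) =>
      by_cases hx : ∃ i ∈ S, 2*m+1 ≤ i
      · obtain ⟨i, hiS, hi⟩ := hx
        have hib : i ≤ 2*m+2 := by
          have := hsub hiS; simp [Finset.mem_Icc] at this; omega
        -- all other elements are ≤ 2*(m-1)
        have hrest : S.erase i ⊆ Finset.Icc 1 (2*(m-1)) := by
          intro j hj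
          have hjS : j ∈ S := Finset.mem_of_mem_erase hj
          have hne : j ≠ i := Finset.ne_of_mem_erase hj
          have hj1 : 1 ≤ j := hleg.1 j hjS
          have hjb : j ≤ 2*m+2 := by
            have := hsub hjS; simp [Finset.mem_Icc] at this; omega
          have habs := hleg.2 i hiS j hjS (fun h => hne h.symm)
          rcases le_abs.mp habs with h | h <;>
          · simp [Finset.mem_Icc]; omega
        have hlegE : KLegal (S.erase i) :=
          ⟨fun j hj => hleg.1 j (Finset.mem_of_mem_erase hj),
           fun a ha b hb hab => hleg.2 a (Finset.mem_of_mem_erase ha)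
             b (Finset.mem_of_mem_erase hb) hab⟩
        have hIH := ih (m-1) (by omega) (S.erase i) hlegE hrest
        have hsum : kent i + ∑ j ∈ S.erase i, kent j = ∑ j ∈ S, kent j :=
          Finset.add_sum_erase S kent hiS
        have hki : kent i ≤ kent (2*m+2) := kent_mono hib
        have hid := kent_split m
        have : (2:ℕ)*(m+1)+1 = 2*m+3 := by ring
        rw [this]
        omega
      · push_neg at hx
        have hsub' : S ⊆ Finset.Icc 1 (2*m) := by
          intro j hj
          have h1 := hleg.1 j hj
          have h2 := hx j hj
          simp [Finset.mem_Icc]; omega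
        have hIH := ih m (by omega) S hleg hsub'
        have hmono : kent (2*m+1) ≤ kent (2*(m+1)+1) := kent_mono (by omega)
        omega

lemma kent_witness : ∀ n, 1 ≤ n → ∃ S : Finset ℕ, KLegal S ∧ S ⊆ Finset.Icc 1 (2*n) ∧
    ∑ i ∈ S, kent i = kent (2*n+1) - 1 := by
  intro n
  induction n using Nat.strong_induction_on with
  | _ n ih =>
    intro hn
    match n with
    | 1 =>
      refine ⟨{2}, ⟨by simp, by simp⟩, by simp [Finset.mem_Icc], by simp [kent]⟩
    | 2 =>
      refine ⟨{4}, ⟨by simp, by simp⟩, by simp [Finset.mem_Icc], by norm_num [kent]⟩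
    | (m+3) =>
      obtain ⟨S, hl, hsub, hsum⟩ := ih (m+1) (by omega) (by omega)
      have hbound : ∀ j ∈ S, 1 ≤ j ∧ j ≤ 2*m+2 := by
        intro j hj
        have := hsub hj; simp [Finset.mem_Icc] at this; omega
      have hnotmem : (2*m+6) ∉ S := by
        intro h; have := (hbound _ h).2; omega
      refine ⟨insert (2*m+6) S, ⟨?_, ?_⟩, ?_, ?_⟩
      · intro i hi
        rcases Finset.mem_insert.mp hi with h | h
        · omega
        · exact hl.1 i h
      · intro i hi j hj hij
        rcases Finset.mem_insert.mp hi with h1 | h1 <;>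
        rcases Finset.mem_insert.mp hj with h2 | h2
        · omega
        · have := hbound j h2
          rcases this with ⟨ha, hb⟩
          rw [le_abs]; subst h1; left
          have : ((j+1)/2 : ℕ) ≤ m+1 := by omega
          have : ((2*m+6+1)/2 : ℕ) = m+3 := by omega
          omega
        · have := hbound i h1
          rcases this with ⟨ha, hb⟩
          rw [le_abs]; subst h2; right
          have : ((i+1)/2 : ℕ) ≤ m+1 := by omega
          have : ((2*m+6+1)/2 : ℕ) = m+3 := by omega
          omega
        · exact hl.2 i h1 j h2 hij
      · intro j hj
        rcases Finset.mem_insert.mp hj with h | h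
        · simp [Finset.mem_Icc]; omega
        · have := hbound j h; simp [Finset.mem_Icc]; omega
      · rw [Finset.sum_insert hnotmem, hsum,
          show 2*(m+1)+1 = 2*m+3 from by ring]
        have hkey := kent_key (m+1)
        have e1 : 2*(m+1)+5 = 2*(m+3)+1 := by ring
        have e2 : 2*(m+1)+4 = 2*m+6 := by ring
        have e3 : 2*(m+1)+1 = 2*m+3 := by ring
        rw [e1, e2, e3] at hkey
        have hpos : 1 ≤ kent (2*m+3) := kent_pos (by omega)
        omega

/-- For `n ≥ 1`, the largest integer expressible as `Σ_{i∈S} a i` with `S` a Kentucky-2 legal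
subset of `{1,…,2n}` is `a (2n+1) - 1`; consequently every integer in `[0, a (2n+1))` has its
(unique) Kentucky-2 legal decomposition supported on indices `≤ 2n`. -/
theorem kentucky_max_with_bounded_indices (n : ℕ) (hn : 1 ≤ n) :
    IsGreatest
        {m : ℕ | ∃ S : Finset ℕ, KLegal S ∧ S ⊆ Finset.Icc 1 (2 * n) ∧ ∑ i ∈ S, kent i = m}
        (kent (2 * n + 1) - 1) ∧
      ∀ m : ℕ, m < kent (2 * n + 1) →
        ∀ S : Finset ℕ, KLegal S → ∑ i ∈ S, kent i = m → ∀ i ∈ S, i ≤ 2 * n := by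
  constructor
  · constructor
    · obtain ⟨S, h1, h2, h3⟩ := kent_witness n hn
      exact ⟨S, h1, h2, h3⟩
    · rintro m ⟨S, hl, hsub, hsum⟩
      have := kent_bound n S hl hsub
      omega
  · intro m hm S hl hsum i hiS
    by_contra hgt
    push_neg at hgt
    have h1 : kent i ≤ ∑ j ∈ S, kent j :=
      Finset.single_le_sum (fun j _ => Nat.zero_le (kent j)) hiS
    have h2 : kent (2*n+1) ≤ kent i := kent_mono (by omega)
    omega
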